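/- arXiv:2604.08149 — 2 statements merged into one kernel-verified Lean document; each statement's English description precedes it below -/
import Mathlib

section
/- Let y₁,…,y_T ∈ ℝ^d with ‖y_t‖₂ ≤ 1, λ ≥ 1, V₀ = λ I_d, and V_t = λ I_d + Σ_{τ=1}^t y_τ y_τᵀ. Then Σ_{t=1}^T ‖V_{t-1}^{-1/2} y_t‖₂ ≤ √(2 d T ln(1 + T/(dλ))). -/
set_option maxHeartbeats 800000
open Matrix

lemma aux_le_two_log {u : ℝ} (hu0 : 0 ≤ u) (hu1 : u ≤ 1) :
    u ≤ 2 * Real.log (1 + u) := by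
  have h1 : (0:ℝ) < 1 + u := by linarith
  have h2 : Real.log (1 + u)⁻¹ ≤ (1 + u)⁻¹ - 1 :=
    Real.log_le_sub_one_of_pos (by positivity)
  rw [Real.log_inv] at h2
  have hinv : (1 + u) * (1 + u)⁻¹ = 1 := mul_inv_cancel₀ h1.ne'
  have hvpos : 0 < (1 + u)⁻¹ := by positivity
  nlinarith [hinv, hvpos, mul_pos h1 hvpos]

lemma aux_vecMulVec_psd {d : ℕ} (v : Fin d → ℝ) : (vecMulVec v v).PosSemidef := by
  have h1 : vecMulVec v v = replicateCol (Fin 1) v * (replicateCol (Fin 1) v)ᴴ := by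
    rw [Matrix.conjTranspose_replicateCol, Matrix.vecMulVec_eq (Fin 1)]
    simp
    rfl
  rw [h1]
  exact Matrix.posSemidef_self_mul_conjTranspose _

lemma aux_trace_eq_sum_eigenvalues {d : ℕ} {A : Matrix (Fin d) (Fin d) ℝ}
    (hA : A.IsHermitian) : A.trace = ∑ i, hA.eigenvalues i := by
  simpa using hA.trace_eq_sum_eigenvalues

lemma aux_det_le_trace_div_pow {d : ℕ} (hd : 0 < d) {A : Matrix (Fin d) (Fin d) ℝ}
    (hA : A.PosDef) : A.det ≤ (A.trace / d) ^ d := by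
  have hH := hA.isHermitian
  set μ := hH.eigenvalues with hμ
  have hμpos : ∀ i, 0 < μ i := hA.eigenvalues_pos
  have hdR : (0:ℝ) < (d:ℝ) := by exact_mod_cast hd
  have hgm : ∏ i, μ i ^ ((d:ℝ)⁻¹) ≤ ∑ i, (d:ℝ)⁻¹ * μ i :=
    Real.geom_mean_le_arith_mean_weighted Finset.univ _ _
      (fun i _ => by positivity) (by simp [Finset.card_univ]; field_simp)
      (fun i _ => (hμpos i).le)
  have hdet : A.det = ∏ i, μ i := by simpa using hH.det_eq_prod_eigenvalues
  have htr : A.trace = ∑ i, μ i := aux_trace_eq_sum_eigenvalues hH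
  have hpow : (∏ i, μ i ^ ((d:ℝ)⁻¹)) ^ d = ∏ i, μ i := by
    rw [← Finset.prod_pow]
    refine Finset.prod_congr rfl fun i _ => ?_
    rw [← Real.rpow_natCast (μ i ^ ((d:ℝ)⁻¹)) d, ← Real.rpow_mul (hμpos i).le]
    rw [inv_mul_cancel₀ hdR.ne', Real.rpow_one]
  have hnn : 0 ≤ ∏ i, μ i ^ ((d:ℝ)⁻¹) :=
    Finset.prod_nonneg fun i _ => Real.rpow_nonneg (hμpos i).le _
  calc A.det = (∏ i, μ i ^ ((d:ℝ)⁻¹)) ^ d := by rw [hpow, hdet]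
    _ ≤ (∑ i, (d:ℝ)⁻¹ * μ i) ^ d := pow_le_pow_left₀ hnn hgm d
    _ = (A.trace / d) ^ d := by rw [htr, ← Finset.mul_sum]; ring_nf

/-- Elliptic potential lemma: with `V_t = λ I + ∑_{τ ≤ t} y_τ y_τᵀ`, `λ ≥ 1`, and
`‖y_t‖₂ ≤ 1`, one has `∑_{t=1}^T ‖V_{t-1}^{-1/2} y_t‖₂ ≤ √(2 d T ln(1 + T/(dλ)))`,
where `‖V_{t-1}^{-1/2} y_t‖₂ = √(y_tᵀ V_{t-1}⁻¹ y_t)`. -/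
theorem elliptic_potential {d : ℕ} (T : ℕ) (y : ℕ → Fin d → ℝ)
    (hy : ∀ t, Real.sqrt (∑ i, (y t i) ^ 2) ≤ 1) (lam : ℝ) (hlam : 1 ≤ lam)
    (V : ℕ → Matrix (Fin d) (Fin d) ℝ)
    (hV : ∀ t, V t = lam • (1 : Matrix (Fin d) (Fin d) ℝ)
        + ∑ τ ∈ Finset.range t, Matrix.vecMulVec (y τ) (y τ)) :
    ∑ t ∈ Finset.range T, Real.sqrt (y t ⬝ᵥ (V t)⁻¹.mulVec (y t))
      ≤ Real.sqrt (2 * d * T * Real.log (1 + (T : ℝ) / (d * lam))) := by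
  rcases Nat.eq_zero_or_pos d with hd | hd
  · subst hd
    have h0 : ∀ t, (y t ⬝ᵥ (V t)⁻¹.mulVec (y t)) = 0 := by
      intro t; simp [dotProduct]
    simp only [h0, Real.sqrt_zero, Finset.sum_const_zero]
    exact Real.sqrt_nonneg _
  have hlam0 : (0:ℝ) < lam := lt_of_lt_of_le one_pos hlam
  have hdR : (0:ℝ) < (d:ℝ) := by exact_mod_cast hd
  have hy2 : ∀ t, ∑ i, (y t i)^2 ≤ 1 := by
    intro t
    have h := hy t
    have hnn : (0:ℝ) ≤ ∑ i, (y t i)^2 := by positivity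
    nlinarith [Real.sq_sqrt hnn, Real.sqrt_nonneg (∑ i, (y t i)^2)]
  have hPSD : ∀ t, (∑ τ ∈ Finset.range t, vecMulVec (y τ) (y τ)).PosSemidef := by
    intro t
    induction t with
    | zero => simpa using (Matrix.PosSemidef.zero (n := Fin d) (R := ℝ))
    | succ n ih =>
      rw [Finset.sum_range_succ]
      exact ih.add (aux_vecMulVec_psd (y n))
  have hPD : ∀ t, (V t).PosDef := by
    intro t
    rw [hV t]
    refine Matrix.PosDef.add_posSemidef ?_ (hPSD t)
    rw [Matrix.smul_one_eq_diagonal]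
    exact Matrix.PosDef.diagonal (fun i => hlam0)
  set u : ℕ → ℝ := fun t => y t ⬝ᵥ (V t)⁻¹.mulVec (y t) with hu
  have hVinv : ∀ t, V t * (V t)⁻¹ = 1 := fun t =>
    Matrix.mul_nonsing_inv _ (isUnit_iff_ne_zero.2 (hPD t).det_pos.ne')
  have hu0 : ∀ t, 0 ≤ u t := by
    intro t
    have h := ((hPD t).inv.posSemidef).dotProduct_mulVec_nonneg (y t)
    simpa using h
  have hu1 : ∀ t, u t ≤ 1 := by
    intro t
    set w : Fin d → ℝ := (V t)⁻¹.mulVec (y t) with hw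
    have hVw : (V t).mulVec w = y t := by
      rw [hw, Matrix.mulVec_mulVec, hVinv t, Matrix.one_mulVec]
    have hCS : (∑ i, y t i * w i)^2 ≤ (∑ i, (y t i)^2) * (∑ i, (w i)^2) := by
      simpa [sq] using Finset.sum_mul_sq_le_sq_mul_sq Finset.univ (y t) w
    have hquad : lam * (∑ i, (w i)^2) ≤ w ⬝ᵥ ((V t).mulVec w) := by
      rw [hV t, Matrix.add_mulVec, dotProduct_add, Matrix.smul_mulVec,
        Matrix.one_mulVec, dotProduct_smul]
      have h1 : 0 ≤ w ⬝ᵥ ((∑ τ ∈ Finset.range t, vecMulVec (y τ) (y τ)).mulVec w) := by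
        simpa using (hPSD t).dotProduct_mulVec_nonneg w
      have h2 : w ⬝ᵥ w = ∑ i, (w i)^2 := by simp [dotProduct, sq]
      rw [smul_eq_mul, h2]
      linarith
    have huw : u t = ∑ i, y t i * w i := rfl
    have hwy : w ⬝ᵥ ((V t).mulVec w) = u t := by
      rw [hVw, hu]
      exact dotProduct_comm _ _
    have hwnn : (0:ℝ) ≤ ∑ i, (w i)^2 := by positivity
    have hynn : (0:ℝ) ≤ ∑ i, (y t i)^2 := by positivity
    nlinarith [hu0 t, hy2 t, sq_nonneg (u t - 1),
      mul_le_mul_of_nonneg_right hlam hwnn]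
  have hdet : ∀ t, (V (t+1)).det = (V t).det * (1 + u t) := by
    intro t
    have hstep : V (t+1) = V t + vecMulVec (y t) (y t) := by
      rw [hV (t+1), hV t, Finset.sum_range_succ, add_assoc]
    have hfac : V t + vecMulVec (y t) (y t)
        = V t * (1 + replicateCol (Fin 1) ((V t)⁻¹.mulVec (y t)) * replicateRow (Fin 1) (y t)) := by
      rw [Matrix.mul_add, mul_one, ← Matrix.mul_assoc, ← Matrix.replicateCol_mulVec,
        Matrix.mulVec_mulVec, hVinv t, Matrix.one_mulVec,
        Matrix.vecMulVec_eq (Fin 1)]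
      rfl
    rw [hstep, hfac, Matrix.det_mul]
    erw [Matrix.det_one_add_replicateCol_mul_replicateRow]
  have hlog : ∀ n, ∑ t ∈ Finset.range n, Real.log (1 + u t)
      = Real.log ((V n).det) - Real.log ((V 0).det) := by
    intro n
    induction n with
    | zero => simp
    | succ n ih =>
      rw [Finset.sum_range_succ, ih, hdet n,
        Real.log_mul (hPD n).det_pos.ne' (by nlinarith [hu0 n])]
      ring
  have hdet0 : (V 0).det = lam ^ d := by
    rw [hV 0]
    simp [Matrix.det_smul]
  have htr : (V T).trace ≤ d * lam + T := by
    rw [hV T, Matrix.trace_add, Matrix.trace_smul, Matrix.trace_one, Matrix.trace_sum]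
    have hτ : ∀ τ, (vecMulVec (y τ) (y τ)).trace = ∑ i, (y τ i)^2 := by
      intro τ
      simp [Matrix.trace, Matrix.diag, Matrix.vecMulVec_apply, sq]
    have : ∑ τ ∈ Finset.range T, (vecMulVec (y τ) (y τ)).trace ≤ T := by
      calc ∑ τ ∈ Finset.range T, (vecMulVec (y τ) (y τ)).trace
          ≤ ∑ τ ∈ Finset.range T, 1 := Finset.sum_le_sum fun τ _ => by
            rw [hτ τ]; exact hy2 τ
        _ = T := by simp
    have hcard : (Fintype.card (Fin d) : ℝ) = d := by simp
    calc lam • (Fintype.card (Fin d) : ℝ) + ∑ τ ∈ Finset.range T, (vecMulVec (y τ) (y τ)).trace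
        ≤ lam * d + T := by rw [smul_eq_mul, hcard]; linarith
      _ = d * lam + T := by ring
  have hdetT : (V T).det ≤ (lam + T / d) ^ d := by
    have h1 := aux_det_le_trace_div_pow hd (hPD T)
    have htrpos : 0 < (V T).trace := by
      have := aux_trace_eq_sum_eigenvalues (hPD T).isHermitian
      rw [this]
      exact Finset.sum_pos (fun i _ => (hPD T).eigenvalues_pos i)
        (Finset.univ_nonempty_iff.2 (Fin.pos_iff_nonempty.mp hd))
    have h2 : (V T).trace / d ≤ lam + T / d := by
      rw [div_le_iff₀ hdR]
      calc (V T).trace ≤ d * lam + T := htr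
        _ = (lam + T / d) * d := by field_simp
    refine h1.trans (pow_le_pow_left₀ ?_ h2 d)
    positivity
  have hlogdet : Real.log ((V T).det) ≤ d * Real.log (lam + T / d) := by
    calc Real.log ((V T).det) ≤ Real.log ((lam + T / d) ^ d) :=
          Real.log_le_log (hPD T).det_pos hdetT
      _ = d * Real.log (lam + T / d) := by rw [Real.log_pow]
  have hlogratio : Real.log (lam + T / d) - Real.log lam
      = Real.log (1 + (T:ℝ) / (d * lam)) := by
    rw [← Real.log_div (by positivity) hlam0.ne']
    congr 1
    field_simp
  have hsumu : ∑ t ∈ Finset.range T, u t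
      ≤ 2 * (d * Real.log (1 + (T:ℝ) / (d * lam))) := by
    calc ∑ t ∈ Finset.range T, u t
        ≤ ∑ t ∈ Finset.range T, 2 * Real.log (1 + u t) :=
          Finset.sum_le_sum fun t _ => aux_le_two_log (hu0 t) (hu1 t)
      _ = 2 * (Real.log ((V T).det) - Real.log ((V 0).det)) := by
          rw [← Finset.mul_sum, hlog T]
      _ ≤ 2 * (d * Real.log (1 + (T:ℝ) / (d * lam))) := by
          have : Real.log ((V 0).det) = d * Real.log lam := by
            rw [hdet0, Real.log_pow]
          rw [this, ← hlogratio]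
          have hexp : (d:ℝ) * (Real.log (lam + (T:ℝ)/(d:ℝ)) - Real.log lam)
              = (d:ℝ) * Real.log (lam + (T:ℝ)/(d:ℝ)) - (d:ℝ) * Real.log lam := by ring
          rw [hexp]
          linarith [hlogdet]
  have hCS2 : (∑ t ∈ Finset.range T, Real.sqrt (u t))^2
      ≤ T * ∑ t ∈ Finset.range T, u t := by
    have h := sq_sum_le_card_mul_sum_sq (s := Finset.range T)
      (f := fun t => Real.sqrt (u t))
    rw [Finset.card_range] at h
    have h2 : ∑ t ∈ Finset.range T, Real.sqrt (u t) ^ 2 = ∑ t ∈ Finset.range T, u t :=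
      Finset.sum_congr rfl fun t _ => Real.sq_sqrt (hu0 t)
    rw [h2] at h
    exact_mod_cast h
  have hlhs0 : 0 ≤ ∑ t ∈ Finset.range T, Real.sqrt (u t) :=
    Finset.sum_nonneg fun t _ => Real.sqrt_nonneg _
  calc ∑ t ∈ Finset.range T, Real.sqrt (y t ⬝ᵥ (V t)⁻¹.mulVec (y t))
      = Real.sqrt ((∑ t ∈ Finset.range T, Real.sqrt (u t))^2) := by
        rw [Real.sqrt_sq hlhs0]
    _ ≤ Real.sqrt (2 * d * T * Real.log (1 + (T:ℝ) / (d * lam))) := by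
        apply Real.sqrt_le_sqrt
        calc (∑ t ∈ Finset.range T, Real.sqrt (u t))^2
            ≤ T * ∑ t ∈ Finset.range T, u t := hCS2
          _ ≤ T * (2 * (d * Real.log (1 + (T:ℝ) / (d * lam)))) := by
              apply mul_le_mul_of_nonneg_left (hsumu) (by positivity)
          _ = 2 * d * T * Real.log (1 + (T:ℝ) / (d * lam)) := by ring
end

section
/- Let λ ≥ 1, integers S ≥ 1 and ℓ ≥ 1, and vectors y_t ∈ ℝ^d with ‖y_t‖₂ ≤ 1. Define V₀ = λ I_d and V_t = λ I_d + Σ_{τ=1}^t y_τ y_τᵀ. Then Σ_{s=1}^{S} Σ_{τ=(s−1)ℓ+1}^{sℓ} ‖V_{(s−1)ℓ}^{−1/2} y_τ‖₂ ≤ √( 2 d S ℓ (1 + ℓ/λ) ln(1 + Sℓ/(dλ)) ). -/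
open Matrix


section StagedEllipticHelpers

variable {d : ℕ}

private lemma see_dot_vecMulVec (y x : Fin d → ℝ) :
    x ⬝ᵥ (vecMulVec y y) *ᵥ x = (y ⬝ᵥ x)^2 := by
  have h1 : (vecMulVec y y) *ᵥ x = fun i => y i * (y ⬝ᵥ x) := by
    ext i; simp [mulVec, vecMulVec_apply, dotProduct, Finset.mul_sum, mul_assoc]
  rw [h1]
  show ∑ i, x i * (y i * (y ⬝ᵥ x)) = (y ⬝ᵥ x)^2
  calc ∑ i, x i * (y i * (y ⬝ᵥ x)) = (∑ i, y i * x i) * (y ⬝ᵥ x) := by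
        rw [Finset.sum_mul]; exact Finset.sum_congr rfl fun i _ => by ring
    _ = (y ⬝ᵥ x)^2 := by rw [← dotProduct, sq]

private lemma see_psd_vecMulVec (y : Fin d → ℝ) : (vecMulVec y y).PosSemidef := by
  refine Matrix.PosSemidef.of_dotProduct_mulVec_nonneg ?_ ?_
  · ext i j; simp [vecMulVec_apply, mul_comm, conjTranspose_apply]
  · intro x
    rw [star_trivial, see_dot_vecMulVec]
    positivity

private lemma see_posdef_smul_one {lam : ℝ} (h : 0 < lam) :
    (lam • (1 : Matrix (Fin d) (Fin d) ℝ)).PosDef := by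
  rw [smul_one_eq_diagonal]
  exact Matrix.PosDef.diagonal (fun _ => h)

variable {A : Matrix (Fin d) (Fin d) ℝ}

private lemma see_sym_dot (hA : A.IsHermitian) (u v : Fin d → ℝ) :
    u ⬝ᵥ A *ᵥ v = (A *ᵥ u) ⬝ᵥ v := by
  rw [Matrix.dotProduct_mulVec, ← Matrix.mulVec_transpose]
  congr 1
  rw [← conjTranspose_eq_transpose_of_trivial, hA.eq]

private lemma see_quad_nonneg (hA : A.PosSemidef) (x : Fin d → ℝ) : 0 ≤ x ⬝ᵥ A *ᵥ x := by
  simpa using hA.dotProduct_mulVec_nonneg x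

private lemma see_mulVec_inv_cancel (hA : A.PosDef) (v : Fin d → ℝ) :
    A *ᵥ (A⁻¹ *ᵥ v) = v := by
  rw [mulVec_mulVec, Matrix.mul_nonsing_inv _ hA.det_pos.ne'.isUnit, one_mulVec]

private lemma see_key_var (hA : A.PosDef) {c : ℝ} (hc : 0 < c) (u v : Fin d → ℝ) :
    2 * (v ⬝ᵥ u) - c⁻¹ * (u ⬝ᵥ A *ᵥ u) ≤ c * (v ⬝ᵥ A⁻¹ *ᵥ v) := by
  have h0 : 0 ≤ (u - c • (A⁻¹ *ᵥ v)) ⬝ᵥ A *ᵥ (u - c • (A⁻¹ *ᵥ v)) :=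
    see_quad_nonneg hA.posSemidef _
  have hcross : (A⁻¹ *ᵥ v) ⬝ᵥ (A *ᵥ u) = v ⬝ᵥ u := by
    rw [see_sym_dot hA.isHermitian, see_mulVec_inv_cancel hA]
  have hinv : (A⁻¹ *ᵥ v) ⬝ᵥ v = v ⬝ᵥ A⁻¹ *ᵥ v := dotProduct_comm _ _
  have hexp : (u - c • (A⁻¹ *ᵥ v)) ⬝ᵥ A *ᵥ (u - c • (A⁻¹ *ᵥ v))
      = u ⬝ᵥ A *ᵥ u - 2 * c * (v ⬝ᵥ u) + c ^ 2 * (v ⬝ᵥ A⁻¹ *ᵥ v) := by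
    rw [mulVec_sub, mulVec_smul, see_mulVec_inv_cancel hA]
    simp only [sub_dotProduct, dotProduct_sub, smul_dotProduct, dotProduct_smul,
      smul_eq_mul]
    rw [hcross, hinv, dotProduct_comm u v]
    ring
  rw [hexp] at h0
  have h2 : c⁻¹ * (u ⬝ᵥ A *ᵥ u - 2 * c * (v ⬝ᵥ u) + c ^ 2 * (v ⬝ᵥ A⁻¹ *ᵥ v))
      = c⁻¹ * (u ⬝ᵥ A *ᵥ u) - 2 * (v ⬝ᵥ u) + c * (v ⬝ᵥ A⁻¹ *ᵥ v) := by
    field_simp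
  have h1 : 0 ≤ c⁻¹ * (u ⬝ᵥ A *ᵥ u - 2 * c * (v ⬝ᵥ u) + c ^ 2 * (v ⬝ᵥ A⁻¹ *ᵥ v)) :=
    mul_nonneg (by positivity) h0
  rw [h2] at h1
  linarith

private lemma see_inv_quad_le {B : Matrix (Fin d) (Fin d) ℝ} (hA : A.PosDef) (hB : B.PosDef)
    {c : ℝ} (hc : 0 < c) (h : ∀ x, x ⬝ᵥ A *ᵥ x ≤ c * (x ⬝ᵥ B *ᵥ x)) (v : Fin d → ℝ) :
    v ⬝ᵥ B⁻¹ *ᵥ v ≤ c * (v ⬝ᵥ A⁻¹ *ᵥ v) := by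
  have h2 : (B⁻¹ *ᵥ v) ⬝ᵥ B *ᵥ (B⁻¹ *ᵥ v) = v ⬝ᵥ B⁻¹ *ᵥ v := by
    rw [see_sym_dot hB.isHermitian, see_mulVec_inv_cancel hB]
  have h3 := see_key_var hA hc (B⁻¹ *ᵥ v) v
  have h4 := h (B⁻¹ *ᵥ v)
  have h5 : c⁻¹ * ((B⁻¹ *ᵥ v) ⬝ᵥ A *ᵥ (B⁻¹ *ᵥ v)) ≤ (B⁻¹ *ᵥ v) ⬝ᵥ B *ᵥ (B⁻¹ *ᵥ v) := by
    rw [inv_mul_le_iff₀ hc]; exact h4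
  have h6 : v ⬝ᵥ (B⁻¹ *ᵥ v) = v ⬝ᵥ B⁻¹ *ᵥ v := rfl
  linarith

private lemma see_det_add_rankone (hA : A.PosDef) (v : Fin d → ℝ) :
    det (A + vecMulVec v v) = det A * (1 + v ⬝ᵥ A⁻¹ *ᵥ v) := by
  have hdet : IsUnit A.det := hA.det_pos.ne'.isUnit
  have h1 : A + vecMulVec v v = A * (1 + A⁻¹ * vecMulVec v v) := by
    rw [mul_add, mul_one, Matrix.mul_nonsing_inv_cancel_left _ _ hdet]
  rw [h1, det_mul]
  congr 1
  have h2 : A⁻¹ * vecMulVec v v = replicateCol (Fin 1) (A⁻¹ *ᵥ v) * replicateRow (Fin 1) v := by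
    rw [vecMulVec_eq (Fin 1), ← Matrix.mul_assoc, ← replicateCol_mulVec]; rfl
  rw [h2]; exact det_one_add_replicateCol_mul_replicateRow _ _

private lemma see_trace_eq_sum_eigen (hA : A.IsHermitian) :
    A.trace = ∑ i, hA.eigenvalues i := by
  nth_rewrite 1 [hA.spectral_theorem]
  rw [Unitary.conjStarAlgAut_apply]
  rw [Matrix.trace_mul_cycle]
  rw [show (star (hA.eigenvectorUnitary : Matrix (Fin d) (Fin d) ℝ)) *
      (hA.eigenvectorUnitary : Matrix (Fin d) (Fin d) ℝ) = 1 from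
    (Unitary.mem_iff.mp hA.eigenvectorUnitary.2).1]
  rw [one_mul, trace_diagonal]
  simp

private lemma see_sum_log_le (hd : 0 < d) (μ : Fin d → ℝ) (hμ : ∀ i, 0 < μ i) :
    ∑ i, Real.log (μ i) ≤ d * Real.log ((∑ i, μ i) / d) := by
  have hne : (Finset.univ : Finset (Fin d)).Nonempty := ⟨⟨0, hd⟩, Finset.mem_univ _⟩
  have hsum : 0 < ∑ i, μ i := Finset.sum_pos (fun i _ => hμ i) hne
  set m : ℝ := (∑ i, μ i) / d with hm
  have hmpos : 0 < m := by positivity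
  have step : ∀ i : Fin d, Real.log (μ i) ≤ Real.log m + (μ i / m - 1) := by
    intro i
    have h1 : Real.log (μ i / m) ≤ μ i / m - 1 :=
      Real.log_le_sub_one_of_pos (div_pos (hμ i) hmpos)
    rw [Real.log_div (hμ i).ne' hmpos.ne'] at h1
    linarith
  calc ∑ i, Real.log (μ i) ≤ ∑ i : Fin d, (Real.log m + (μ i / m - 1)) :=
        Finset.sum_le_sum fun i _ => step i
    _ = d * Real.log m + ((∑ i, μ i) / m - d) := by
        rw [Finset.sum_add_distrib, Finset.sum_const, Finset.card_univ, Fintype.card_fin,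
          Finset.sum_sub_distrib, Finset.sum_const, Finset.card_univ, Fintype.card_fin,
          ← Finset.sum_div]
        ring
    _ = d * Real.log m := by
        have : (∑ i, μ i) / m = d := by
          rw [hm]; field_simp
        rw [this]; ring

private lemma see_log_det_le (hA : A.PosDef) (hd : 0 < d) :
    Real.log A.det ≤ d * Real.log (A.trace / d) := by
  rw [hA.isHermitian.det_eq_prod_eigenvalues, see_trace_eq_sum_eigen hA.isHermitian]
  have hpos : ∀ i : Fin d, 0 < hA.isHermitian.eigenvalues i := hA.eigenvalues_pos
  simp only [RCLike.ofReal_real_eq_id, id_eq]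
  rw [Real.log_prod (fun i _ => (hpos i).ne')]
  exact see_sum_log_le hd _ hpos

private lemma see_sum_sqrt_le (t : Finset ℕ) (f : ℕ → ℝ) (hf : ∀ τ ∈ t, 0 ≤ f τ) :
    ∑ τ ∈ t, Real.sqrt (f τ) ≤ Real.sqrt (t.card * ∑ τ ∈ t, f τ) := by
  have h := sq_sum_le_card_mul_sum_sq (s := t) (f := fun τ => Real.sqrt (f τ))
  have h2 : ∑ τ ∈ t, Real.sqrt (f τ) ^ 2 = ∑ τ ∈ t, f τ :=
    Finset.sum_congr rfl fun τ hτ => Real.sq_sqrt (hf τ hτ)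
  rw [h2] at h
  have h3 : 0 ≤ ∑ τ ∈ t, Real.sqrt (f τ) :=
    Finset.sum_nonneg fun τ _ => Real.sqrt_nonneg _
  calc ∑ τ ∈ t, Real.sqrt (f τ) = Real.sqrt ((∑ τ ∈ t, Real.sqrt (f τ)) ^ 2) :=
        (Real.sqrt_sq h3).symm
    _ ≤ Real.sqrt (t.card * ∑ τ ∈ t, f τ) := Real.sqrt_le_sqrt h

private lemma see_le_two_log {x : ℝ} (h0 : 0 ≤ x) (h1 : x ≤ 1) :
    x ≤ 2 * Real.log (1 + x) := by
  have hx1 : (0:ℝ) < 1 + x := by linarith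
  have key : x / (1 + x) ≤ Real.log (1 + x) := by
    have h2 : Real.log ((1 + x)⁻¹) ≤ (1 + x)⁻¹ - 1 :=
      Real.log_le_sub_one_of_pos (by positivity)
    rw [Real.log_inv] at h2
    have h3 : x / (1 + x) = 1 - (1 + x)⁻¹ := by field_simp; ring
    linarith [h3.le, h3.ge]
  have h4 : x ≤ 2 * (x / (1 + x)) := by
    rw [mul_div_assoc', le_div_iff₀ hx1]
    nlinarith
  linarith

private lemma see_quad_sum (s : Finset ℕ) (M : ℕ → Matrix (Fin d) (Fin d) ℝ)
    (x : Fin d → ℝ) :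
    x ⬝ᵥ (∑ ρ ∈ s, M ρ) *ᵥ x = ∑ ρ ∈ s, x ⬝ᵥ (M ρ) *ᵥ x := by
  induction s using Finset.induction with
  | empty => simp
  | insert _ _ h ih =>
    rw [Finset.sum_insert h, Finset.sum_insert h, add_mulVec, dotProduct_add, ih]

private lemma see_regroup (g : ℕ → ℝ) (ℓ : ℕ) (S : ℕ) :
    ∑ s ∈ Finset.range S, ∑ τ ∈ Finset.Ioc (s*ℓ) ((s+1)*ℓ), g τ
      = ∑ τ ∈ Finset.Ioc 0 (S*ℓ), g τ := by
  induction S with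
  | zero => simp
  | succ n ih =>
    rw [Finset.sum_range_succ, ih,
      Finset.sum_Ioc_consecutive _ (Nat.zero_le (n*ℓ)) (Nat.mul_le_mul_right ℓ (Nat.le_succ n))]

end StagedEllipticHelpers

/-- Elliptic potential lemma with staged updates: with `V_t = λ I + ∑_{τ=1}^t y_τ y_τᵀ`,
`λ ≥ 1`, `‖y_t‖₂ ≤ 1`, and `‖V^{-1/2} y‖₂ = √(yᵀ V⁻¹ y)`,
`∑_{s=1}^S ∑_{τ=(s−1)ℓ+1}^{sℓ} ‖V_{(s−1)ℓ}^{−1/2} y_τ‖₂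
  ≤ √(2 d S ℓ (1 + ℓ/λ) ln(1 + Sℓ/(dλ)))`. -/
theorem staged_elliptic_potential {d : ℕ} (lam : ℝ) (hlam : 1 ≤ lam)
    (S ℓ : ℕ) (hS : 1 ≤ S) (hℓ : 1 ≤ ℓ)
    (y : ℕ → Fin d → ℝ) (hy : ∀ t, Real.sqrt (∑ i, (y t i) ^ 2) ≤ 1)
    (V : ℕ → Matrix (Fin d) (Fin d) ℝ)
    (hV : ∀ t, V t = lam • (1 : Matrix (Fin d) (Fin d) ℝ)
        + ∑ τ ∈ Finset.Icc 1 t, Matrix.vecMulVec (y τ) (y τ)) :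
    ∑ s ∈ Finset.Icc 1 S, ∑ τ ∈ Finset.Icc ((s - 1) * ℓ + 1) (s * ℓ),
        Real.sqrt (y τ ⬝ᵥ (V ((s - 1) * ℓ))⁻¹.mulVec (y τ))
      ≤ Real.sqrt (2 * d * S * ℓ * (1 + (ℓ : ℝ) / lam)
          * Real.log (1 + (S : ℝ) * ℓ / (d * lam))) := by
  rcases Nat.eq_zero_or_pos d with hd | hd
  · subst hd
    have hz : ∀ (v w : Fin 0 → ℝ), v ⬝ᵥ w = 0 := fun v w => by
      simp [dotProduct]
    simp only [hz, Real.sqrt_zero, Finset.sum_const_zero]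
    exact Real.sqrt_nonneg _
  have hlam0 : (0:ℝ) < lam := lt_of_lt_of_le one_pos hlam
  have hℓ0 : (0:ℝ) < (ℓ:ℝ) := by exact_mod_cast hℓ
  have hS0 : (0:ℝ) < (S:ℝ) := by exact_mod_cast hS
  have hd0 : (0:ℝ) < (d:ℝ) := by exact_mod_cast hd
  set c : ℝ := 1 + (ℓ:ℝ)/lam with hc
  have hcpos : 0 < c := by positivity
  -- basic positivity facts
  have hPSD : ∀ t, (∑ τ ∈ Finset.Icc 1 t, vecMulVec (y τ) (y τ)).PosSemidef := fun t =>
    Finset.sum_induction _ _ (fun a b ha hb => ha.add hb) Matrix.PosSemidef.zero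
      (fun τ _ => see_psd_vecMulVec (y τ))
  have hVpd : ∀ t, (V t).PosDef := fun t =>
    (hV t) ▸ (see_posdef_smul_one hlam0).add_posSemidef (hPSD t)
  have hdet : ∀ t, 0 < (V t).det := fun t => (hVpd t).det_pos
  have hyy0 : ∀ t, 0 ≤ y t ⬝ᵥ y t := fun t =>
    Finset.sum_nonneg fun i _ => mul_self_nonneg _
  have hyy : ∀ t, y t ⬝ᵥ y t ≤ 1 := by
    intro t
    have h1 : (0:ℝ) ≤ ∑ i, (y t i)^2 := Finset.sum_nonneg fun i _ => sq_nonneg _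
    have h2 := hy t
    have h3 : y t ⬝ᵥ y t = ∑ i, (y t i)^2 := by simp [dotProduct, sq]
    nlinarith [Real.sq_sqrt h1, Real.sqrt_nonneg (∑ i, (y t i)^2)]
  have hVlow : ∀ t (x : Fin d → ℝ), lam * (x ⬝ᵥ x) ≤ x ⬝ᵥ (V t) *ᵥ x := by
    intro t x
    rw [hV t, add_mulVec, dotProduct_add, smul_mulVec, one_mulVec,
      dotProduct_smul, smul_eq_mul]
    have := see_quad_nonneg (hPSD t) x
    linarith
  have hsm : ∀ x : Fin d → ℝ, x ⬝ᵥ (lam • (1:Matrix (Fin d) (Fin d) ℝ)) *ᵥ x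
      = lam * (x ⬝ᵥ x) := by
    intro x
    rw [smul_mulVec, one_mulVec, dotProduct_smul, smul_eq_mul]
  have hsmulinv : (lam • (1 : Matrix (Fin d) (Fin d) ℝ))⁻¹ = lam⁻¹ • 1 := by
    apply Matrix.inv_eq_right_inv
    rw [Matrix.smul_mul, Matrix.mul_smul, smul_smul, mul_inv_cancel₀ hlam0.ne',
      one_mul, one_smul]
  have hq0 : ∀ t τ, 0 ≤ y τ ⬝ᵥ (V t)⁻¹ *ᵥ y τ := fun t τ =>
    see_quad_nonneg ((hVpd t).inv).posSemidef _
  have hq1 : ∀ t τ, y τ ⬝ᵥ (V t)⁻¹ *ᵥ y τ ≤ 1 := by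
    intro t τ
    have h := see_inv_quad_le (see_posdef_smul_one hlam0) (hVpd t) one_pos
      (fun x => by rw [one_mul, hsm]; exact hVlow t x) (y τ)
    rw [hsmulinv, one_mul, smul_mulVec, one_mulVec, dotProduct_smul,
      smul_eq_mul] at h
    have h2 : lam⁻¹ * (y τ ⬝ᵥ y τ) ≤ 1 := by
      rw [inv_mul_le_iff₀ hlam0, mul_one]
      exact le_trans (hyy τ) hlam
    linarith
  -- potential argument
  have hVstep : ∀ t : ℕ, V (t+1) = V t + vecMulVec (y (t+1)) (y (t+1)) := by
    intro t
    rw [hV (t+1), hV t, Finset.sum_Icc_succ_top (Nat.succ_le_succ (Nat.zero_le t)),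
      add_assoc]
  have hstep : ∀ t : ℕ, y (t+1) ⬝ᵥ (V t)⁻¹ *ᵥ y (t+1)
      ≤ 2*(Real.log (V (t+1)).det - Real.log (V t).det) := by
    intro t
    have hdet2 : (V (t+1)).det = (V t).det * (1 + y (t+1) ⬝ᵥ (V t)⁻¹ *ᵥ y (t+1)) := by
      rw [hVstep t]; exact see_det_add_rankone (hVpd t) _
    have hlog : Real.log (V (t+1)).det
        = Real.log (V t).det + Real.log (1 + y (t+1) ⬝ᵥ (V t)⁻¹ *ᵥ y (t+1)) := by
      rw [hdet2, Real.log_mul (hdet t).ne' (by nlinarith [hq0 t (t+1)])]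
    have h2 := see_le_two_log (hq0 t (t+1)) (hq1 t (t+1))
    rw [hlog]
    linarith
  have hpot : ∀ T : ℕ, ∑ τ ∈ Finset.Icc 1 T, (y τ ⬝ᵥ (V (τ-1))⁻¹ *ᵥ y τ)
      ≤ 2*(Real.log (V T).det - Real.log (V 0).det) := by
    intro T
    induction T with
    | zero => simp
    | succ T ih =>
      rw [Finset.sum_Icc_succ_top (Nat.succ_le_succ (Nat.zero_le T))]
      have h2 := hstep T
      simp only [Nat.add_sub_cancel]
      linarith
  -- trace bound
  have htrform : ∀ T : ℕ, (V T).trace = lam * d + ∑ τ ∈ Finset.Icc 1 T, (y τ ⬝ᵥ y τ) := by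
    intro T
    have htr1 : ∀ τ : ℕ, (vecMulVec (y τ) (y τ)).trace = y τ ⬝ᵥ y τ := fun τ => by
      simp [Matrix.trace, Matrix.diag, vecMulVec_apply, dotProduct]
    rw [hV T, trace_add, trace_smul, trace_one, Matrix.trace_sum]
    simp only [Fintype.card_fin, smul_eq_mul, htr1]
  have htrace : ∀ T : ℕ, (V T).trace ≤ d * lam + T := by
    intro T
    rw [htrform T]
    have h2 : ∑ τ ∈ Finset.Icc 1 T, (y τ ⬝ᵥ y τ) ≤ (T:ℝ) := by
      calc ∑ τ ∈ Finset.Icc 1 T, (y τ ⬝ᵥ y τ) ≤ ∑ τ ∈ Finset.Icc 1 T, (1:ℝ) :=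
            Finset.sum_le_sum fun τ _ => hyy τ
        _ = (T:ℝ) := by rw [Finset.sum_const, Nat.card_Icc]; simp
    linarith [h2, mul_comm lam (d:ℝ)]
  have htrpos : ∀ T : ℕ, 0 < (V T).trace := by
    intro T
    rw [htrform T]
    have : 0 ≤ ∑ τ ∈ Finset.Icc 1 T, (y τ ⬝ᵥ y τ) :=
      Finset.sum_nonneg fun τ _ => hyy0 τ
    nlinarith
  -- log det difference bound
  have hlogdet : ∀ T : ℕ, Real.log (V T).det - Real.log (V 0).det
      ≤ d * Real.log (1 + (T:ℝ)/(d*lam)) := by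
    intro T
    have h0 : V 0 = lam • 1 := by rw [hV 0]; simp
    have hdet0 : (V 0).det = lam ^ d := by
      rw [h0, det_smul, det_one, mul_one, Fintype.card_fin]
    have hlog0 : Real.log (V 0).det = d * Real.log lam := by
      rw [hdet0, Real.log_pow]
    have h1 := see_log_det_le (hVpd T) hd
    have h2 : Real.log ((V T).trace / d) ≤ Real.log ((d*lam + T)/d) := by
      rw [Real.log_le_log_iff (div_pos (htrpos T) hd0) (by positivity)]
      exact div_le_div_of_nonneg_right (htrace T) hd0.le
    have h3 : Real.log ((d*lam + (T:ℝ))/d) - Real.log lam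
        = Real.log (1 + (T:ℝ)/(d*lam)) := by
      rw [← Real.log_div (by positivity) hlam0.ne']
      congr 1
      field_simp
    have h4 : (d:ℝ) * Real.log ((V T).trace / d) ≤ d * Real.log ((d*lam + T)/d) :=
      mul_le_mul_of_nonneg_left h2 hd0.le
    calc Real.log (V T).det - Real.log (V 0).det
        ≤ d * Real.log ((d*lam + T)/d) - d * Real.log lam := by
          rw [hlog0]; linarith
      _ = d * Real.log (1 + (T:ℝ)/(d*lam)) := by rw [← h3]; ring
  -- stage comparison
  have hstage : ∀ s' : ℕ, ∀ τ ∈ Finset.Icc (s'*ℓ+1) ((s'+1)*ℓ),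
      y τ ⬝ᵥ (V (s'*ℓ))⁻¹ *ᵥ y τ ≤ c * (y τ ⬝ᵥ (V (τ-1))⁻¹ *ᵥ y τ) := by
    intro s' τ hτ
    rw [Finset.mem_Icc] at hτ
    obtain ⟨h1, h2⟩ := hτ
    have hab : s'*ℓ ≤ τ - 1 := by omega
    have hba : τ - 1 - s'*ℓ ≤ ℓ := by
      have h3 : (s'+1)*ℓ = s'*ℓ + ℓ := by rw [add_one_mul]
      omega
    have hVab : V (τ-1) = V (s'*ℓ) + ∑ ρ ∈ Finset.Ioc (s'*ℓ) (τ-1), vecMulVec (y ρ) (y ρ) := by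
      rw [hV (τ-1), hV (s'*ℓ), add_assoc]
      congr 1
      rw [show Finset.Icc 1 (τ-1) = Finset.Ioc 0 (τ-1) from Finset.Icc_add_one_left_eq_Ioc 0 (τ-1),
        show Finset.Icc 1 (s'*ℓ) = Finset.Ioc 0 (s'*ℓ) from Finset.Icc_add_one_left_eq_Ioc 0 (s'*ℓ)]
      exact (Finset.sum_Ioc_consecutive _ (Nat.zero_le _) hab).symm
    have hcomp : ∀ x : Fin d → ℝ, x ⬝ᵥ (V (τ-1)) *ᵥ x ≤ c * (x ⬝ᵥ (V (s'*ℓ)) *ᵥ x) := by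
      intro x
      have hx0 : 0 ≤ x ⬝ᵥ x := Finset.sum_nonneg fun i _ => mul_self_nonneg _
      have hsum : x ⬝ᵥ (∑ ρ ∈ Finset.Ioc (s'*ℓ) (τ-1), vecMulVec (y ρ) (y ρ)) *ᵥ x
          = ∑ ρ ∈ Finset.Ioc (s'*ℓ) (τ-1), (y ρ ⬝ᵥ x)^2 := by
        rw [see_quad_sum]
        exact Finset.sum_congr rfl fun ρ _ => see_dot_vecMulVec (y ρ) x
      have hterm : ∀ ρ : ℕ, (y ρ ⬝ᵥ x)^2 ≤ x ⬝ᵥ x := by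
        intro ρ
        have hCS := Finset.sum_mul_sq_le_sq_mul_sq Finset.univ (y ρ) x
        have hyρ : ∑ i, (y ρ i)^2 ≤ 1 := by
          have := hyy ρ
          simpa [dotProduct, sq] using this
        have hx2 : x ⬝ᵥ x = ∑ i, (x i)^2 := by simp [dotProduct, sq]
        have hx2' : (0:ℝ) ≤ ∑ i, (x i)^2 := Finset.sum_nonneg fun i _ => sq_nonneg _
        have hdp : y ρ ⬝ᵥ x = ∑ i, y ρ i * x i := rfl
        rw [hdp, hx2]
        nlinarith
      have hsumle : ∑ ρ ∈ Finset.Ioc (s'*ℓ) (τ-1), (y ρ ⬝ᵥ x)^2 ≤ (ℓ:ℝ) * (x ⬝ᵥ x) := by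
        calc ∑ ρ ∈ Finset.Ioc (s'*ℓ) (τ-1), (y ρ ⬝ᵥ x)^2
            ≤ ∑ _ρ ∈ Finset.Ioc (s'*ℓ) (τ-1), (x ⬝ᵥ x) :=
              Finset.sum_le_sum fun ρ _ => hterm ρ
          _ = ((τ-1-s'*ℓ : ℕ):ℝ) * (x ⬝ᵥ x) := by
              rw [Finset.sum_const, Nat.card_Ioc, nsmul_eq_mul]
          _ ≤ (ℓ:ℝ) * (x ⬝ᵥ x) := by
              apply mul_le_mul_of_nonneg_right _ hx0
              exact_mod_cast hba
      have hlow := hVlow (s'*ℓ) x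
      have hdiv : (ℓ:ℝ) * (x ⬝ᵥ x) ≤ ((ℓ:ℝ)/lam) * (x ⬝ᵥ (V (s'*ℓ)) *ᵥ x) := by
        have h5 : ((ℓ:ℝ)/lam) * (lam * (x ⬝ᵥ x)) = (ℓ:ℝ) * (x ⬝ᵥ x) := by
          field_simp
        calc (ℓ:ℝ) * (x ⬝ᵥ x) = ((ℓ:ℝ)/lam) * (lam * (x ⬝ᵥ x)) := h5.symm
          _ ≤ ((ℓ:ℝ)/lam) * (x ⬝ᵥ (V (s'*ℓ)) *ᵥ x) :=
              mul_le_mul_of_nonneg_left hlow (by positivity)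
      have hq := see_quad_nonneg (hPSD (τ-1)) x
      rw [hVab, add_mulVec, dotProduct_add, hsum]
      rw [hc]
      nlinarith [hsumle, hdiv]
    exact see_inv_quad_le (hVpd (τ-1)) (hVpd (s'*ℓ)) hcpos hcomp (y τ)
  -- reindex outer sum
  have hre : ∑ s ∈ Finset.Icc 1 S, ∑ τ ∈ Finset.Icc ((s - 1) * ℓ + 1) (s * ℓ),
        Real.sqrt (y τ ⬝ᵥ (V ((s - 1) * ℓ))⁻¹ *ᵥ y τ)
      = ∑ j ∈ Finset.range S, ∑ τ ∈ Finset.Icc (j*ℓ+1) ((j+1)*ℓ),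
        Real.sqrt (y τ ⬝ᵥ (V (j*ℓ))⁻¹ *ᵥ y τ) := by
    rw [← Finset.Ico_add_one_right_eq_Icc, Finset.sum_Ico_eq_sum_range]
    apply Finset.sum_congr (by norm_num)
    intro j _
    rw [add_comm 1 j]
    simp only [Nat.add_sub_cancel]
  rw [hre]
  -- inner Cauchy-Schwarz
  set Q : ℕ → ℝ := fun j => ∑ τ ∈ Finset.Icc (j*ℓ+1) ((j+1)*ℓ),
    (y τ ⬝ᵥ (V (j*ℓ))⁻¹ *ᵥ y τ) with hQ
  have hQ0 : ∀ j, 0 ≤ Q j := fun j => Finset.sum_nonneg fun τ _ => hq0 _ _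
  have hcard : ∀ j : ℕ, (Finset.Icc (j*ℓ+1) ((j+1)*ℓ)).card = ℓ := by
    intro j
    rw [Nat.card_Icc]
    have h3 : (j+1)*ℓ = j*ℓ + ℓ := by rw [add_one_mul]
    omega
  have hinner : ∀ j : ℕ, ∑ τ ∈ Finset.Icc (j*ℓ+1) ((j+1)*ℓ),
      Real.sqrt (y τ ⬝ᵥ (V (j*ℓ))⁻¹ *ᵥ y τ) ≤ Real.sqrt ((ℓ:ℝ) * Q j) := by
    intro j
    have := see_sum_sqrt_le (Finset.Icc (j*ℓ+1) ((j+1)*ℓ))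
      (fun τ => y τ ⬝ᵥ (V (j*ℓ))⁻¹ *ᵥ y τ) (fun τ _ => hq0 _ _)
    rwa [hcard j] at this
  -- outer Cauchy-Schwarz
  have houter : ∑ j ∈ Finset.range S, Real.sqrt ((ℓ:ℝ) * Q j)
      ≤ Real.sqrt ((S:ℝ) * ∑ j ∈ Finset.range S, (ℓ:ℝ) * Q j) := by
    have := see_sum_sqrt_le (Finset.range S) (fun j => (ℓ:ℝ) * Q j)
      (fun j _ => mul_nonneg hℓ0.le (hQ0 j))
    rwa [Finset.card_range] at this
  -- aggregate bound on ∑ Q j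
  have hagg : ∑ j ∈ Finset.range S, Q j
      ≤ c * (2 * ((d:ℝ) * Real.log (1 + (S:ℝ) * ℓ / (d * lam)))) := by
    have h1 : ∀ j ∈ Finset.range S, Q j
        ≤ c * ∑ τ ∈ Finset.Icc (j*ℓ+1) ((j+1)*ℓ), (y τ ⬝ᵥ (V (τ-1))⁻¹ *ᵥ y τ) := by
      intro j _
      rw [Finset.mul_sum]
      exact Finset.sum_le_sum fun τ hτ => hstage j τ hτ
    have h2 : ∑ j ∈ Finset.range S, ∑ τ ∈ Finset.Icc (j*ℓ+1) ((j+1)*ℓ),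
        (y τ ⬝ᵥ (V (τ-1))⁻¹ *ᵥ y τ)
        = ∑ τ ∈ Finset.Icc 1 (S*ℓ), (y τ ⬝ᵥ (V (τ-1))⁻¹ *ᵥ y τ) := by
      rw [show Finset.Icc 1 (S*ℓ) = Finset.Ioc 0 (S*ℓ) from Finset.Icc_add_one_left_eq_Ioc 0 (S*ℓ)]
      rw [← see_regroup (fun τ => y τ ⬝ᵥ (V (τ-1))⁻¹ *ᵥ y τ) ℓ S]
      exact Finset.sum_congr rfl fun j _ => by
        rw [show Finset.Icc (j*ℓ+1) ((j+1)*ℓ) = Finset.Ioc (j*ℓ) ((j+1)*ℓ) from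
          Finset.Icc_add_one_left_eq_Ioc _ _]
    have h3 := hpot (S*ℓ)
    have h4 := hlogdet (S*ℓ)
    have h5 : ((S*ℓ : ℕ):ℝ) = (S:ℝ) * ℓ := by push_cast; ring
    rw [h5] at h4
    calc ∑ j ∈ Finset.range S, Q j
        ≤ ∑ j ∈ Finset.range S, c * ∑ τ ∈ Finset.Icc (j*ℓ+1) ((j+1)*ℓ),
            (y τ ⬝ᵥ (V (τ-1))⁻¹ *ᵥ y τ) := Finset.sum_le_sum h1
      _ = c * ∑ τ ∈ Finset.Icc 1 (S*ℓ), (y τ ⬝ᵥ (V (τ-1))⁻¹ *ᵥ y τ) := by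
          rw [← Finset.mul_sum, h2]
      _ ≤ c * (2*(Real.log (V (S*ℓ)).det - Real.log (V 0).det)) :=
          mul_le_mul_of_nonneg_left h3 hcpos.le
      _ ≤ c * (2 * ((d:ℝ) * Real.log (1 + (S:ℝ) * ℓ / (d * lam)))) := by
          apply mul_le_mul_of_nonneg_left _ hcpos.le
          linarith
  -- final chain
  calc ∑ j ∈ Finset.range S, ∑ τ ∈ Finset.Icc (j*ℓ+1) ((j+1)*ℓ),
        Real.sqrt (y τ ⬝ᵥ (V (j*ℓ))⁻¹ *ᵥ y τ)
      ≤ ∑ j ∈ Finset.range S, Real.sqrt ((ℓ:ℝ) * Q j) :=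
        Finset.sum_le_sum fun j _ => hinner j
    _ ≤ Real.sqrt ((S:ℝ) * ∑ j ∈ Finset.range S, (ℓ:ℝ) * Q j) := houter
    _ ≤ Real.sqrt (2 * d * S * ℓ * c * Real.log (1 + (S:ℝ) * ℓ / (d * lam))) := by
        apply Real.sqrt_le_sqrt
        rw [← Finset.mul_sum]
        calc (S:ℝ) * ((ℓ:ℝ) * ∑ j ∈ Finset.range S, Q j)
            ≤ (S:ℝ) * ((ℓ:ℝ) * (c * (2 * ((d:ℝ) * Real.log (1 + (S:ℝ) * ℓ / (d * lam)))))) := by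
              apply mul_le_mul_of_nonneg_left _ hS0.le
              exact mul_le_mul_of_nonneg_left hagg hℓ0.le
          _ = 2 * d * S * ℓ * c * Real.log (1 + (S:ℝ) * ℓ / (d * lam)) := by ring
end
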